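/- arXiv:1202.5668 — 2 statements merged into one kernel-verified Lean document; each statement's English description precedes it below -/
import Mathlib

section
/- The formal power series F_k(x) = Σ_n f_k(n) x^n, where f_k(n) counts ordered rooted binary trees of size n with largest caterpillar subtree of size at most k (k ≥ 2), satisfies F_k = x + F_k^2 − 2^{k−1} x^{k+1}. -/
/-- Ordered rooted binary trees: a tree is a leaf or an internal node with two ordered children. -/
inductive BTree where
  | leaf : BTree
  | node : BTree → BTree → BTree

/-- Size of a tree = number of leaves. -/
def BTree.size : BTree → ℕ
  | .leaf => 1
  | .node l r => l.size + r.size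

/-- A tree is a caterpillar if every internal node has at least one leaf child. -/
def BTree.isCaterpillar : BTree → Prop
  | .leaf => True
  | .node l r => (l = .leaf ∨ r = .leaf) ∧ l.isCaterpillar ∧ r.isCaterpillar

/-- The list of all subtrees (rooted at some node) of a tree. -/
def BTree.subtrees : BTree → List BTree
  | .leaf => [.leaf]
  | .node l r => .node l r :: (l.subtrees ++ r.subtrees)

/-- γ(t): the size of the biggest caterpillar subtree of `t`. -/
noncomputable def BTree.gamma (t : BTree) : ℕ :=
  sSup {m | ∃ s ∈ t.subtrees, s.isCaterpillar ∧ s.size = m}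

/-- `fcount k n`: number of ordered rooted binary trees of size `n` with γ ≤ k. -/
noncomputable def fcount (k n : ℕ) : ℕ :=
  Nat.card {t : BTree // t.size = n ∧ t.gamma ≤ k}

/-! The coefficient of `x ^ n` in `F_k ^ 2` counts pairs of trees with γ ≤ k of total size `n`.
Cutting the root of a tree of size `n ≥ 2` leaves two trees of total size `n`, both with
γ ≤ k if the tree has γ ≤ k. Conversely, grafting two trees with γ ≤ k onto a new root yields a
tree with γ ≤ k unless the new tree is itself a caterpillar of size `> k`. Its children are then
caterpillars of size `≤ k`, one of them a leaf, so this happens exactly for the `2 ^ (k - 1)`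
caterpillars of size `k + 1`. -/

open Function Finset.HasAntidiagonal

lemma Set.ncard_biUnion_prod {ι α : Type*} (s : Finset (ι × ι)) (A : ι → Set α)
    (hA : ∀ i, (A i).Finite) (hdisj : Pairwise (Disjoint on A)) :
    (⋃ ij ∈ s, A ij.1 ×ˢ A ij.2).ncard = ∑ ij ∈ s, (A ij.1).ncard * (A ij.2).ncard := by
  have hprod : (s : Set (ι × ι)).PairwiseDisjoint fun ij => A ij.1 ×ˢ A ij.2 := by
    rintro ⟨i, j⟩ - ⟨i', j'⟩ - hne
    rw [Function.onFun, Set.disjoint_prod]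
    by_cases hi : i = i'
    · exact Or.inr (hdisj fun hj => hne (by rw [hi, show j = j' from hj]))
    · exact Or.inl (hdisj hi)
  have := s.finite_toSet.ncard_biUnion (fun ij _ => (hA ij.1).prod (hA ij.2)) hprod
  rw [finsum_mem_coe_finset] at this
  simpa only [Finset.mem_coe, Set.ncard_prod] using this

namespace BTree

lemma size_pos (t : BTree) : 0 < t.size := by
  induction t with
  | leaf => exact Nat.one_pos
  | node l r ihl _ => exact Nat.add_pos_left ihl _

lemma eq_leaf_of_size_eq_one {t : BTree} (h : t.size = 1) : t = leaf := by
  cases t with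
  | leaf => rfl
  | node l r => have := l.size_pos; have := r.size_pos; simp only [size] at h; omega

lemma finite_setOf_size_le (n : ℕ) : {t : BTree | t.size ≤ n}.Finite := by
  induction n with
  | zero => exact Set.finite_empty.subset fun t ht => absurd ht (size_pos t).not_ge
  | succ n ih =>
    refine ((ih.image2 node ih).insert leaf).subset ?_
    rintro (_ | ⟨l, r⟩) h
    · exact Set.mem_insert _ _
    · have := l.size_pos; have := r.size_pos
      simp only [Set.mem_ofPred_eq, size] at h
      exact Or.inr ⟨l, show l.size ≤ n by omega, r, show r.size ≤ n by omega, rfl⟩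

lemma injective_uncurry_node : Injective (uncurry node) := by
  rintro ⟨l, r⟩ ⟨l', r'⟩ h
  cases h
  rfl

lemma mem_range_uncurry_node {t : BTree} (h : t ≠ leaf) : t ∈ Set.range (uncurry node) := by
  cases t with
  | leaf => exact absurd rfl h
  | node l r => exact ⟨(l, r), rfl⟩

lemma self_mem_subtrees (t : BTree) : t ∈ t.subtrees := by
  cases t <;> simp [subtrees]

lemma size_le_of_mem_subtrees {s t : BTree} (h : s ∈ t.subtrees) : s.size ≤ t.size := by
  induction t with
  | leaf => simp_all [subtrees]
  | node l r ihl ihr =>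
    simp only [subtrees, List.mem_cons, List.mem_append] at h
    rcases h with rfl | h | h
    · exact le_rfl
    · exact (ihl h).trans (Nat.le_add_right _ _)
    · exact (ihr h).trans (Nat.le_add_left _ _)

lemma gamma_le_iff {t : BTree} {k : ℕ} :
    t.gamma ≤ k ↔ ∀ s ∈ t.subtrees, s.isCaterpillar → s.size ≤ k := by
  have hbdd : BddAbove {m | ∃ s ∈ t.subtrees, s.isCaterpillar ∧ s.size = m} :=
    ⟨t.size, by rintro _ ⟨s, hs, -, rfl⟩; exact size_le_of_mem_subtrees hs⟩
  refine ⟨fun h s hs hc => (le_csSup hbdd ⟨s, hs, hc, rfl⟩).trans h, fun h => csSup_le' ?_⟩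
  rintro _ ⟨s, hs, hc, rfl⟩
  exact h s hs hc

lemma gamma_le_size (t : BTree) : t.gamma ≤ t.size :=
  gamma_le_iff.2 fun _ hs _ => size_le_of_mem_subtrees hs

lemma isCaterpillar.size_le_of_gamma_le {t : BTree} {k : ℕ} (hc : t.isCaterpillar)
    (h : t.gamma ≤ k) : t.size ≤ k :=
  gamma_le_iff.1 h t t.self_mem_subtrees hc

lemma gamma_node_le_iff {l r : BTree} {k : ℕ} :
    (node l r).gamma ≤ k ↔
      l.gamma ≤ k ∧ r.gamma ≤ k ∧ ((node l r).isCaterpillar → l.size + r.size ≤ k) := by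
  simp only [gamma_le_iff, subtrees, List.mem_cons, List.mem_append, or_imp, forall_and,
    forall_eq, size]
  exact and_rotate

def caterpillarsOfSize (n : ℕ) : Set BTree := {t | t.isCaterpillar ∧ t.size = n}

lemma finite_caterpillarsOfSize (n : ℕ) : (caterpillarsOfSize n).Finite :=
  (finite_setOf_size_le n).subset fun _ ht => ht.2.le

lemma caterpillarsOfSize_two : caterpillarsOfSize 2 = {node leaf leaf} := by
  ext (_ | ⟨l, r⟩)
  · simp [caterpillarsOfSize, size]
  · simp only [caterpillarsOfSize, Set.mem_ofPred_eq, Set.mem_singleton_iff, node.injEq, size]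
    constructor
    · rintro ⟨-, h⟩
      have := l.size_pos; have := r.size_pos
      exact ⟨eq_leaf_of_size_eq_one (by omega), eq_leaf_of_size_eq_one (by omega)⟩
    · rintro ⟨rfl, rfl⟩
      exact ⟨⟨Or.inl rfl, trivial, trivial⟩, rfl⟩

lemma caterpillarsOfSize_succ {n : ℕ} (hn : 2 ≤ n) :
    caterpillarsOfSize (n + 1) =
      node leaf '' caterpillarsOfSize n ∪ (node · leaf) '' caterpillarsOfSize n := by
  ext (_ | ⟨l, r⟩)
  · simp [caterpillarsOfSize, size, show n ≠ 0 by omega]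
  · simp only [caterpillarsOfSize, Set.mem_union, Set.mem_image, Set.mem_ofPred_eq, node.injEq,
      isCaterpillar, size]
    constructor
    · rintro ⟨⟨rfl | rfl, hl, hr⟩, h⟩ <;> rw [size] at h
      · exact Or.inl ⟨r, ⟨hr, by omega⟩, rfl, rfl⟩
      · exact Or.inr ⟨l, ⟨hl, by omega⟩, rfl, rfl⟩
    · rintro (⟨c, ⟨hc, rfl⟩, rfl, rfl⟩ | ⟨c, ⟨hc, rfl⟩, rfl, rfl⟩)
      · exact ⟨⟨Or.inl rfl, trivial, hc⟩, by rw [size]; omega⟩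
      · exact ⟨⟨Or.inr rfl, hc, trivial⟩, rfl⟩

lemma ncard_caterpillarsOfSize (m : ℕ) : (caterpillarsOfSize (m + 2)).ncard = 2 ^ m := by
  induction m with
  | zero => simp [caterpillarsOfSize_two]
  | succ m ih =>
    have hdisj : Disjoint (node leaf '' caterpillarsOfSize (m + 2))
        ((node · leaf) '' caterpillarsOfSize (m + 2)) := by
      rw [Set.disjoint_left]
      rintro _ ⟨c, -, rfl⟩ ⟨c', ⟨-, hc'⟩, h⟩
      rw [node.injEq] at h
      rw [h.1] at hc'
      simp [size] at hc'
    rw [caterpillarsOfSize_succ (by omega), Set.ncard_union_eq hdisj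
      ((finite_caterpillarsOfSize _).image _) ((finite_caterpillarsOfSize _).image _),
      Set.ncard_image_of_injective _ fun _ _ h => (node.inj h).2,
      Set.ncard_image_of_injective _ fun _ _ h => (node.inj h).1, ih, pow_succ, mul_two]

def boundedOfSize (k n : ℕ) : Set BTree := {t | t.size = n ∧ t.gamma ≤ k}

lemma ncard_boundedOfSize (k n : ℕ) : (boundedOfSize k n).ncard = fcount k n := rfl

def boundedPairs (k n : ℕ) : Set (BTree × BTree) :=
  {p | p.1.gamma ≤ k ∧ p.2.gamma ≤ k ∧ p.1.size + p.2.size = n}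

lemma boundedPairs_eq_biUnion (k n : ℕ) :
    boundedPairs k n = ⋃ ij ∈ antidiagonal n, boundedOfSize k ij.1 ×ˢ boundedOfSize k ij.2 := by
  ext ⟨l, r⟩
  simp only [boundedPairs, boundedOfSize, Set.mem_iUnion, Set.mem_prod, Set.mem_ofPred_eq,
    mem_antidiagonal, exists_prop, Prod.exists]
  constructor
  · rintro ⟨hl, hr, h⟩
    exact ⟨_, _, h, ⟨rfl, hl⟩, rfl, hr⟩
  · rintro ⟨i, j, h, ⟨rfl, hl⟩, rfl, hr⟩
    exact ⟨hl, hr, h⟩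

lemma ncard_boundedPairs (k n : ℕ) :
    (boundedPairs k n).ncard = ∑ ij ∈ antidiagonal n, fcount k ij.1 * fcount k ij.2 := by
  rw [boundedPairs_eq_biUnion, Set.ncard_biUnion_prod]
  · rfl
  · exact fun m => (finite_setOf_size_le m).subset fun _ ht => ht.1.le
  · intro i j hij
    exact Set.disjoint_left.2 fun t hi hj => hij (hi.1.symm.trans hj.1)

lemma finite_boundedPairs (k n : ℕ) : (boundedPairs k n).Finite := by
  refine ((finite_setOf_size_le n).prod (finite_setOf_size_le n)).subset fun p hp => ?_
  have := p.1.size_pos; have := p.2.size_pos; have := hp.2.2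
  exact ⟨show p.1.size ≤ n by omega, show p.2.size ≤ n by omega⟩

lemma boundedPairs_one (k : ℕ) : boundedPairs k 1 = ∅ :=
  Set.eq_empty_of_forall_notMem fun p hp => by
    have := p.1.size_pos; have := p.2.size_pos; have := hp.2.2; omega

lemma boundedPairs_inter_gamma_le (k n : ℕ) :
    boundedPairs k n ∩ {p | (node p.1 p.2).gamma ≤ k} = uncurry node ⁻¹' boundedOfSize k n := by
  ext ⟨l, r⟩
  simp only [boundedPairs, boundedOfSize, Set.mem_inter_iff, Set.mem_ofPred_eq, Set.mem_preimage,
    uncurry_apply_pair, size]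
  constructor
  · rintro ⟨⟨-, -, h⟩, hg⟩
    exact ⟨h, hg⟩
  · rintro ⟨h, hg⟩
    obtain ⟨hl, hr, -⟩ := gamma_node_le_iff.1 hg
    exact ⟨⟨hl, hr, h⟩, hg⟩

lemma boundedPairs_diff_gamma_le (k n : ℕ) :
    boundedPairs k n \ {p | (node p.1 p.2).gamma ≤ k} =
      uncurry node ⁻¹' {t | t ∈ caterpillarsOfSize n ∧ n = k + 1} := by
  ext ⟨l, r⟩
  simp only [boundedPairs, caterpillarsOfSize, Set.mem_sdiff, Set.mem_ofPred_eq, Set.mem_preimage,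
    uncurry_apply_pair, gamma_node_le_iff, size, not_and, Classical.not_imp, not_le]
  have := l.size_pos; have := r.size_pos
  constructor
  · rintro ⟨⟨hl, hr, rfl⟩, hbad⟩
    obtain ⟨hc, hkn⟩ := hbad hl hr
    refine ⟨⟨hc, rfl⟩, ?_⟩
    rcases hc.1 with rfl | rfl
    · have := hc.2.2.size_le_of_gamma_le hr
      rw [size] at hkn ⊢
      omega
    · have := hc.2.1.size_le_of_gamma_le hl
      rw [size] at hkn ⊢
      omega
  · rintro ⟨⟨hc, rfl⟩, hn⟩
    exact ⟨⟨(gamma_le_size l).trans (by omega), (gamma_le_size r).trans (by omega), rfl⟩,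
      fun _ _ => ⟨hc, by omega⟩⟩

lemma ncard_boundedPairs_of_ne_one {k n : ℕ} (hk : 1 ≤ k) (hn : n ≠ 1) :
    (boundedPairs k n).ncard = fcount k n + if n = k + 1 then 2 ^ (k - 1) else 0 := by
  rw [← Set.ncard_inter_add_ncard_sdiff_eq_ncard _ _ (finite_boundedPairs k n),
    boundedPairs_inter_gamma_le, boundedPairs_diff_gamma_le,
    Set.ncard_preimage_of_injective_subset_range injective_uncurry_node
      fun t ht => mem_range_uncurry_node (by rintro rfl; exact hn ht.1.symm),
    Set.ncard_preimage_of_injective_subset_range injective_uncurry_node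
      fun t ht => mem_range_uncurry_node (by rintro rfl; have : 1 = n := ht.1.2; omega)]
  congr 1
  split_ifs with h
  · obtain ⟨m, rfl⟩ : ∃ m, k = m + 1 := ⟨k - 1, by omega⟩
    simpa [h] using ncard_caterpillarsOfSize m
  · simp [h]

end BTree

open BTree

lemma fcount_one {k : ℕ} (hk : 1 ≤ k) : fcount k 1 = 1 := by
  rw [← ncard_boundedOfSize, Set.ncard_eq_one]
  refine ⟨leaf, Set.ext fun t => ⟨fun ht => eq_leaf_of_size_eq_one ht.1, ?_⟩⟩
  rintro rfl
  exact ⟨rfl, (gamma_le_size leaf).trans hk⟩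

lemma fcount_add_ite_eq {k : ℕ} (hk : 1 ≤ k) (n : ℕ) :
    fcount k n + (if n = k + 1 then 2 ^ (k - 1) else 0) =
      (if n = 1 then 1 else 0) + ∑ ij ∈ antidiagonal n, fcount k ij.1 * fcount k ij.2 := by
  rw [← ncard_boundedPairs]
  rcases eq_or_ne n 1 with rfl | hn
  · rw [boundedPairs_one, fcount_one hk, if_neg (by omega)]
    simp
  · rw [ncard_boundedPairs_of_ne_one hk hn, if_neg hn, zero_add]

/-- The generating function `F_k(x) = Σ_n f_k(n) x^n` (as a formal power series over ℚ)
satisfies `F_k = x + F_k² − 2^{k−1} x^{k+1}` for `k ≥ 2`. -/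
theorem fgen_functional_equation (k : ℕ) (hk : 2 ≤ k) :
    (PowerSeries.mk fun n => (fcount k n : ℚ)) =
      PowerSeries.X + (PowerSeries.mk fun n => (fcount k n : ℚ)) ^ 2 -
        PowerSeries.C (R := ℚ) (2 ^ (k - 1)) * PowerSeries.X ^ (k + 1) := by
  refine eq_sub_of_add_eq (PowerSeries.ext fun n => ?_)
  rw [map_add, map_add, PowerSeries.coeff_C_mul_X_pow, PowerSeries.coeff_X, pow_two,
    PowerSeries.coeff_mul]
  simp only [PowerSeries.coeff_mk]
  exact_mod_cast fcount_add_ite_eq (k := k) (by omega) n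
end

section
/- Under the bijection φ from ordered rooted binary trees of size n+1 to 132-avoiding permutations of size n, a node m of t with subtree t_m satisfies: t_m is a caterpillar of size j+1 if and only if the pattern-reduction of r_π(m) (the permutation r̃_π(m)) is a 231-avoiding permutation of size j. In particular γ(t) − 1 equals the maximal size of a permutation in Av(231) ∩ r̃_π. -/
/-- The bijection φ from ordered rooted binary trees of size `n+1` to 132-avoiding
permutations of size `n` (written as lists of values): the internal nodes are labelled
in pre-order decreasingly starting from `n`, and the permutation is read off by
collapsing leaves; equivalently `φ(node l r) = (φ l shifted by size r − 1) ++ [n] ++ φ r`. -/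
def phi : BTree → List ℕ
  | .leaf => []
  | .node l r => ((phi l).map (· + (r.size - 1))) ++ (l.size + r.size - 1) :: phi r

/-- `rsub π i` is the subsequence of entries `π_k` such that `π_k ≤ π_i` and every entry
strictly between positions `k` and `i` is `≤ π_i` (the entries of `r_π(π_i)` in order). -/
def rsub (π : List ℕ) (i : ℕ) : List ℕ :=
  ((List.range π.length).filter (fun k =>
    decide (π.getD k 0 ≤ π.getD i 0) &&
      (List.range π.length).all (fun j =>
        !(decide (min k i < j) && decide (j < max k i)) ||
          decide (π.getD j 0 ≤ π.getD i 0)))).map (fun k => π.getD k 0)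

/-- A list of (distinct) values avoids the pattern 231: no positions `i < j < k`
with `l_k < l_i < l_j`. -/
def Avoids231 (l : List ℕ) : Prop :=
  ∀ i j k : Fin l.length, i < j → j < k → ¬ (l.get k < l.get i ∧ l.get i < l.get j)

/-- The subtree of `t` rooted at the internal node labelled `m` by the pre-order
decreasing labelling used by φ (`none` if there is no such node). -/
def subAt : BTree → ℕ → Option BTree
  | .leaf, _ => none
  | .node l r, m =>
    if m = l.size + r.size - 1 then some (.node l r)
    else if r.size ≤ m then subAt l (m - (r.size - 1))
    else subAt r m

/-!
The subtree `t_m` occupies a contiguous factor of `φ(t)`: a shifted copy of `φ(t_m)`, all of whose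
entries are `≤ m` and which is flanked on both sides by entries larger than `m`. Hence `r_π(m)` is
exactly this factor and `r̃_π(m) = φ(t_m)`. It remains that `s` is a caterpillar iff `φ(s)` avoids
231: if a child of the root is a leaf, `φ(s)` is `φ` of the other child with a new maximum put in
front or at the end, which creates no 231; if neither child is a leaf, an entry from the left
child, the root label and an entry from the right child form a 231. The statement about `γ`
follows by maximising over the entries of `π`, which are exactly the labels of internal nodes.
-/

namespace List

lemma filter_range_eq_range' {n a b : ℕ} {p : ℕ → Bool} (hb : b ≤ n)
    (hp : ∀ k < n, p k ↔ a ≤ k ∧ k < b) : (range n).filter p = range' a (b - a) := by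
  refine (pairwise_lt_range.filter p).eq_of_mem_iff (pairwise_lt_range' 1) fun k => ?_
  simp only [mem_filter, mem_range, mem_range'_1]
  constructor
  · rintro ⟨hk, hpk⟩
    have := (hp k hk).1 hpk
    omega
  · intro hk
    exact ⟨by omega, (hp k (by omega)).2 (by omega)⟩

lemma getD_append_append_length_add {α : Type*} (A M B : List α) (d : α) {q : ℕ}
    (hq : q < M.length) : (A ++ M ++ B).getD (A.length + q) d = M[q] := by
  rw [append_assoc, getD_append_right _ _ _ _ (by omega), Nat.add_sub_cancel_left,
    getD_append _ _ _ _ hq, getD_eq_getElem _ _ hq]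

lemma map_getD_range'_append_append {α : Type*} (A M B : List α) (d : α) :
    (range' A.length M.length).map (fun k => (A ++ M ++ B).getD k d) = M := by
  refine ext_getElem (by simp) fun q _ hq => ?_
  simp only [getElem_map, getElem_range', one_mul]
  exact getD_append_append_length_add A M B d hq

end List

lemma avoids231_iff_sublist {l : List ℕ} :
    Avoids231 l ↔ ∀ a b c, [a, b, c].Sublist l → ¬ (c < a ∧ a < b) := by
  constructor
  · rintro hl a b c habc
    obtain ⟨f, hf⟩ := List.sublist_iff_exists_fin_orderEmbedding_get_eq.1 habc
    have := hl (f 0) (f 1) (f 2) (f.lt_iff_lt.2 (by simp)) (f.lt_iff_lt.2 (by simp [Fin.lt_def]))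
    rwa [← hf 0, ← hf 1, ← hf 2] at this
  · intro hl i j k hij hjk
    have hmono : StrictMono ![i, j, k] := by
      rw [Fin.strictMono_iff_lt_succ]
      intro n
      fin_cases n <;> simpa
    exact hl _ _ _ <| List.sublist_iff_exists_fin_orderEmbedding_get_eq.2
      ⟨OrderEmbedding.ofStrictMono _ hmono, fun n => by fin_cases n <;> rfl⟩

lemma avoids231_map_iff {f : ℕ → ℕ} (hf : StrictMono f) {l : List ℕ} :
    Avoids231 (l.map f) ↔ Avoids231 l := by
  simp only [avoids231_iff_sublist]
  constructor
  · intro hl a b c habc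
    simpa only [hf.lt_iff_lt] using hl _ _ _ (habc.map f)
  · intro hl a b c habc
    obtain ⟨l', hl', h⟩ := List.sublist_map_iff.1 habc
    rcases l' with _ | ⟨a', _ | ⟨b', _ | ⟨c', _ | _⟩⟩⟩ <;>
      simp only [List.map_cons, List.map_nil, List.cons.injEq, reduceCtorEq, and_false] at h
    obtain ⟨rfl, rfl, rfl, -⟩ := h
    simpa only [hf.lt_iff_lt] using hl _ _ _ hl'

lemma avoids231_cons_iff {x : ℕ} {l : List ℕ} (hx : ∀ y ∈ l, y < x) :
    Avoids231 (x :: l) ↔ Avoids231 l := by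
  simp only [avoids231_iff_sublist]
  refine ⟨fun hl a b c habc => hl a b c (habc.cons x), fun hl a b c habc => ?_⟩
  rcases List.sublist_cons_iff.1 habc with habc | ⟨_, h, hbc⟩
  · exact hl a b c habc
  · obtain ⟨rfl, rfl⟩ := List.cons.inj h
    have := hx b (hbc.subset (by simp))
    omega

lemma avoids231_append_singleton_iff {x : ℕ} {l : List ℕ} (hx : ∀ y ∈ l, y < x) :
    Avoids231 (l ++ [x]) ↔ Avoids231 l := by
  simp only [avoids231_iff_sublist]
  refine ⟨fun hl a b c habc => hl a b c (List.sublist_append_of_sublist_left habc),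
    fun hl a b c habc => ?_⟩
  rw [← List.reverse_sublist, List.reverse_append, List.reverse_singleton, List.singleton_append,
    List.sublist_cons_iff] at habc
  rcases habc with habc | ⟨_, h, hba⟩
  · exact hl a b c (List.reverse_sublist.1 habc)
  · obtain ⟨rfl, rfl⟩ := List.cons.inj h
    have := hx a (List.mem_reverse.1 (hba.subset (by simp)))
    omega

namespace BTree

lemma one_le_size (t : BTree) : 1 ≤ t.size := by
  induction t with
  | leaf => exact le_rfl
  | node l r _ _ => simp only [size]; omega

lemma two_le_size_of_ne_leaf {t : BTree} (h : t ≠ leaf) : 2 ≤ t.size := by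
  cases t with
  | leaf => exact absurd rfl h
  | node l r => have := l.one_le_size; have := r.one_le_size; simp only [size]; omega

lemma leaf_mem_subtrees (t : BTree) : leaf ∈ t.subtrees := by
  induction t with
  | leaf => exact List.mem_singleton_self _
  | node l r ihl _ => exact List.mem_cons_of_mem _ (List.mem_append_left _ ihl)

lemma node_leaf_leaf_mem_subtrees : ∀ {t : BTree}, 2 ≤ t.size → node leaf leaf ∈ t.subtrees
  | .leaf, h => absurd h (by decide)
  | .node l r, _ => by
    rw [subtrees, List.mem_cons, List.mem_append]
    by_cases hl : l = leaf
    · by_cases hr : r = leaf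
      · exact Or.inl (by rw [hl, hr])
      · exact Or.inr (Or.inr (node_leaf_leaf_mem_subtrees (two_le_size_of_ne_leaf hr)))
    · exact Or.inr (Or.inl (node_leaf_leaf_mem_subtrees (two_le_size_of_ne_leaf hl)))

lemma isGreatest_gamma (t : BTree) :
    IsGreatest {m | ∃ s ∈ t.subtrees, s.isCaterpillar ∧ s.size = m} t.gamma := by
  have hfin : {m | ∃ s ∈ t.subtrees, s.isCaterpillar ∧ s.size = m}.Finite :=
    (t.subtrees.map size).finite_toSet.subset fun _ ⟨s, hs, _, hm⟩ => hm ▸ List.mem_map_of_mem hs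
  exact ⟨Set.Nonempty.csSup_mem ⟨1, leaf, t.leaf_mem_subtrees, trivial, rfl⟩ hfin,
    fun _ hm => le_csSup hfin.bddAbove hm⟩

lemma two_le_gamma {t : BTree} (h : 2 ≤ t.size) : 2 ≤ t.gamma :=
  t.isGreatest_gamma.2 ⟨_, node_leaf_leaf_mem_subtrees h, ⟨Or.inl rfl, trivial, trivial⟩, rfl⟩

end BTree

lemma length_phi (t : BTree) : (phi t).length = t.size - 1 := by
  induction t with
  | leaf => rfl
  | node l r ihl ihr =>
    have := l.one_le_size; have := r.one_le_size
    simp only [phi, BTree.size, List.length_append, List.length_map, List.length_cons, ihl, ihr]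
    omega

lemma mem_phi {t : BTree} {x : ℕ} : x ∈ phi t ↔ 1 ≤ x ∧ x ≤ t.size - 1 := by
  induction t generalizing x with
  | leaf => simp only [phi, BTree.size, List.not_mem_nil, false_iff]; omega
  | node l r ihl ihr =>
    have := l.one_le_size; have := r.one_le_size
    simp only [phi, BTree.size, List.mem_append, List.mem_map, List.mem_cons, ihl, ihr]
    constructor
    · rintro (⟨y, hy, rfl⟩ | rfl | hx) <;> omega
    · intro hx
      by_cases hxr : r.size ≤ x ∧ x < l.size + r.size - 1
      · exact Or.inl ⟨x - (r.size - 1), by omega, by omega⟩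
      · omega

lemma nodup_phi (t : BTree) : (phi t).Nodup := by
  induction t with
  | leaf => exact List.nodup_nil
  | node l r ihl ihr =>
    have := l.one_le_size; have := r.one_le_size
    rw [phi, List.nodup_append, List.nodup_cons]
    refine ⟨ihl.map (add_left_injective _), ⟨fun h => ?_, ihr⟩, ?_⟩
    · have := mem_phi.1 h; omega
    · simp only [List.mem_map, List.mem_cons]
      rintro _ ⟨a, ha, rfl⟩ b (rfl | hb)
      · have := mem_phi.1 ha; omega
      · have := mem_phi.1 ha; have := mem_phi.1 hb; omega

lemma phi_node_leaf_left (r : BTree) : phi (.node .leaf r) = r.size :: phi r := by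
  have := r.one_le_size
  simp only [phi, BTree.size, List.map_nil, List.nil_append]
  congr 1; omega

lemma phi_node_leaf_right (l : BTree) : phi (.node l .leaf) = phi l ++ [l.size] := by
  simp [phi, BTree.size]

lemma not_avoids231_phi_node {l r : BTree} (hl : l ≠ .leaf) (hr : r ≠ .leaf) :
    ¬ Avoids231 (phi (.node l r)) := by
  have := BTree.two_le_size_of_ne_leaf hl; have := BTree.two_le_size_of_ne_leaf hr
  have ha : l.size - 1 ∈ phi l := mem_phi.2 ⟨by omega, le_rfl⟩
  have hb : 1 ∈ phi r := mem_phi.2 ⟨le_rfl, by omega⟩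
  have hpat : [l.size - 1 + (r.size - 1), l.size + r.size - 1, 1].Sublist (phi (.node l r)) :=
    (List.singleton_sublist.2 (List.mem_map_of_mem (f := (· + (r.size - 1))) ha)).append
      (List.cons_sublist_cons.2 (List.singleton_sublist.2 hb))
  exact fun h => avoids231_iff_sublist.1 h _ _ _ hpat (by omega)

lemma isCaterpillar_iff_avoids231_phi (t : BTree) : t.isCaterpillar ↔ Avoids231 (phi t) := by
  induction t with
  | leaf => simp [BTree.isCaterpillar, phi, Avoids231]
  | node l r ihl ihr =>
    by_cases hl : l = .leaf
    · subst hl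
      have hmax : ∀ y ∈ phi r, y < r.size := fun y hy => by have := mem_phi.1 hy; omega
      rw [phi_node_leaf_left, avoids231_cons_iff hmax, ← ihr]
      simp [BTree.isCaterpillar]
    by_cases hr : r = .leaf
    · subst hr
      have hmax : ∀ y ∈ phi l, y < l.size := fun y hy => by have := mem_phi.1 hy; omega
      rw [phi_node_leaf_right, avoids231_append_singleton_iff hmax, ← ihl]
      simp [BTree.isCaterpillar]
    simp only [BTree.isCaterpillar, hl, hr, or_self, false_and, false_iff]
    exact not_avoids231_phi_node hl hr

lemma rsub_eq_filter_Icc (π : List ℕ) (i : ℕ) :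
    rsub π i = ((List.range π.length).filter fun k =>
      ∀ j ∈ Finset.Icc (min k i) (max k i), π.getD j 0 ≤ π.getD i 0).map (π.getD · 0) := by
  unfold rsub
  congr 2
  funext k
  rw [Bool.eq_iff_iff]
  simp only [Bool.and_eq_true, decide_eq_true_eq, List.all_eq_true,
    List.mem_range, Bool.or_eq_true, Bool.not_eq_true', Bool.and_eq_false_iff,
    decide_eq_false_iff_not, not_lt, Finset.mem_Icc]
  constructor
  · rintro ⟨hk, hbetween⟩ j hj
    obtain rfl | rfl | hin : j = k ∨ j = i ∨ (min k i < j ∧ j < max k i) := by omega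
    · exact hk
    · exact le_rfl
    · by_cases hlt : j < π.length
      · exact (hbetween j hlt).resolve_left (by omega)
      · rw [List.getD_eq_default _ _ (not_lt.1 hlt)]; exact Nat.zero_le _
  · intro h
    refine ⟨h k ⟨min_le_left k i, le_max_left k i⟩, fun j _ => ?_⟩
    by_cases hj : min k i < j ∧ j < max k i
    · exact Or.inr (h j ⟨hj.1.le, hj.2.le⟩)
    · omega

lemma rsub_append_append {A M B : List ℕ} {i : ℕ} (hi : i < M.length) (hM : ∀ x ∈ M, x ≤ M[i])
    (hA : ∀ a ∈ A.getLast?, M[i] < a) (hB : ∀ b ∈ B.head?, M[i] < b) :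
    rsub (A ++ M ++ B) (A.length + i) = M := by
  set π := A ++ M ++ B with hπ
  have hlen : π.length = A.length + M.length + B.length := by simp only [π, List.length_append]
  have hblock : ∀ j, A.length ≤ j → j < A.length + M.length → π.getD j 0 ≤ M[i] := by
    intro j hj₁ hj₂
    obtain ⟨q, rfl⟩ := Nat.exists_eq_add_of_le hj₁
    rw [List.getD_append_append_length_add A M B 0 (by omega)]
    exact hM _ (List.getElem_mem _)
  have hleft : 0 < A.length → M[i] < π.getD (A.length - 1) 0 := by
    intro hA0
    apply hA
    rw [hπ, List.append_assoc, List.getD_append _ _ _ _ (by omega),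
      List.getD_eq_getElem _ _ (by omega), List.getLast?_eq_getElem?,
      List.getElem?_eq_getElem (by omega)]
    rfl
  have hright : A.length + M.length < π.length → M[i] < π.getD (A.length + M.length) 0 := by
    intro h
    have hB0 : 0 < B.length := by omega
    apply hB
    rw [hπ, List.getD_append_right _ _ _ _ (by simp), List.length_append, Nat.sub_self,
      List.getD_eq_getElem _ _ hB0, List.head?_eq_getElem?, List.getElem?_eq_getElem hB0]
    rfl
  rw [rsub_eq_filter_Icc, List.getD_append_append_length_add A M B 0 hi,
    List.filter_range_eq_range' (a := A.length) (b := A.length + M.length) (by omega),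
    Nat.add_sub_cancel_left, List.map_getD_range'_append_append]
  intro k hk
  simp only [decide_eq_true_eq, Finset.mem_Icc]
  constructor
  · intro h
    by_contra hk'
    rcases Nat.lt_or_ge k A.length with hkA | hkA
    · exact (hleft (by omega)).not_ge (h _ ⟨by omega, by omega⟩)
    · exact (hright (by omega)).not_ge (h _ ⟨by omega, by omega⟩)
  · rintro hkM j ⟨hj₁, hj₂⟩
    exact hblock j (by omega) (by omega)

lemma mem_subtrees_of_subAt : ∀ {t s : BTree} {m : ℕ}, subAt t m = some s → s ∈ t.subtrees
  | .leaf, _, _, h => by simp [subAt] at h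
  | .node l r, s, m, h => by
    simp only [subAt] at h
    rw [BTree.subtrees, List.mem_cons, List.mem_append]
    split_ifs at h
    · exact Or.inl (Option.some_inj.1 h).symm
    · exact Or.inr (Or.inl (mem_subtrees_of_subAt h))
    · exact Or.inr (Or.inr (mem_subtrees_of_subAt h))

lemma two_le_size_of_subAt : ∀ {t s : BTree} {m : ℕ}, subAt t m = some s → 2 ≤ s.size
  | .leaf, _, _, h => by simp [subAt] at h
  | .node l r, s, m, h => by
    simp only [subAt] at h
    split_ifs at h
    · cases h
      exact BTree.two_le_size_of_ne_leaf BTree.noConfusion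
    · exact two_le_size_of_subAt h
    · exact two_le_size_of_subAt h

lemma mem_phi_of_subAt : ∀ {t s : BTree} {m : ℕ}, subAt t m = some s → m ∈ phi t
  | .leaf, _, _, h => by simp [subAt] at h
  | .node l r, s, m, h => by
    have := l.one_le_size; have := r.one_le_size
    simp only [subAt] at h
    rw [mem_phi, BTree.size]
    split_ifs at h
    · omega
    · have := mem_phi.1 (mem_phi_of_subAt h); omega
    · have := mem_phi.1 (mem_phi_of_subAt h); omega

-- Only the last entry of `A` matters for `rsub`, but "every entry of `A` exceeds `m`" is the form
-- that survives the recursion.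
lemma phi_eq_of_subAt : ∀ {t s : BTree} {m : ℕ}, subAt t m = some s →
    ∃ (A B : List ℕ) (c : ℕ), phi t = A ++ (phi s).map (· + c) ++ B ∧ m = s.size - 1 + c ∧
      (∀ a ∈ A, m < a) ∧ (∀ b ∈ B.head?, m < b)
  | .leaf, _, _, h => by simp [subAt] at h
  | .node l r, s, m, h => by
    have := l.one_le_size; have := r.one_le_size
    simp only [subAt] at h
    split_ifs at h with hroot hleft
    · cases h
      exact ⟨[], [], 0, by simp, by simp only [BTree.size]; omega, by simp, by simp⟩
    · obtain ⟨A, B, c, hphi, hm, hA, hB⟩ := phi_eq_of_subAt h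
      have := mem_phi.1 (mem_phi_of_subAt h)
      refine ⟨A.map (· + (r.size - 1)), B.map (· + (r.size - 1)) ++ (l.size + r.size - 1) :: phi r,
        c + (r.size - 1), ?_, by omega, ?_, ?_⟩
      · simp [phi, hphi, List.map_map, Function.comp_def, add_assoc]
      · simp only [List.mem_map]
        rintro _ ⟨a, ha, rfl⟩
        have := hA a ha
        omega
      · rcases B with _ | ⟨b, B⟩
        · rintro _ ⟨⟩
          omega
        · rintro _ ⟨⟩
          have := hB b rfl
          dsimp only
          omega
    · obtain ⟨A, B, c, hphi, hm, hA, hB⟩ := phi_eq_of_subAt h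
      have := mem_phi.1 (mem_phi_of_subAt h)
      refine ⟨(phi l).map (· + (r.size - 1)) ++ (l.size + r.size - 1) :: A, B, c, ?_, hm, ?_, hB⟩
      · simp [phi, hphi]
      · simp only [List.mem_append, List.mem_map, List.mem_cons]
        rintro a (⟨a', ha', rfl⟩ | rfl | ha)
        · have := mem_phi.1 ha'; omega
        · omega
        · exact hA a ha

lemma exists_rsub_phi_idxOf_eq_map_of_subAt {t s : BTree} {m : ℕ} (h : subAt t m = some s) :
    ∃ c, rsub (phi t) ((phi t).idxOf m) = (phi s).map (· + c) := by
  obtain ⟨A, B, c, hphi, hm, hA, hB⟩ := phi_eq_of_subAt h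
  have := two_le_size_of_subAt h
  set M := (phi s).map (· + c)
  have hmM : m ∈ M := List.mem_map.2 ⟨s.size - 1, mem_phi.2 ⟨by omega, le_rfl⟩, hm.symm⟩
  have hidx : (phi t).idxOf m = A.length + M.idxOf m := by
    rw [hphi, List.append_assoc, List.idxOf_append_of_notMem fun hmA => (hA m hmA).false,
      List.idxOf_append_of_mem hmM]
  have hi : M.idxOf m < M.length := List.idxOf_lt_length_iff.2 hmM
  have hMi : M[M.idxOf m] = m := List.getElem_idxOf hi
  refine ⟨c, ?_⟩
  rw [hidx, hphi]
  apply rsub_append_append hi <;> rw [hMi]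
  · intro x hx
    obtain ⟨y, hy, rfl⟩ := List.mem_map.1 hx
    have := mem_phi.1 hy
    omega
  · exact fun a ha => hA a (List.mem_of_mem_getLast? ha)
  · exact hB

lemma isCaterpillar_and_size_iff_of_subAt {t s : BTree} {m : ℕ} (h : subAt t m = some s)
    (j : ℕ) : (s.isCaterpillar ∧ s.size = j + 1) ↔
      (Avoids231 (rsub (phi t) ((phi t).idxOf m)) ∧
        (rsub (phi t) ((phi t).idxOf m)).length = j) := by
  obtain ⟨c, hc⟩ := exists_rsub_phi_idxOf_eq_map_of_subAt h
  have := s.one_le_size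
  rw [hc, avoids231_map_iff fun _ _ hab => Nat.add_lt_add_right hab c,
    ← isCaterpillar_iff_avoids231_phi, List.length_map, length_phi]
  exact and_congr_right fun _ => by omega

lemma exists_subAt_of_mem_phi : ∀ {t : BTree} {m : ℕ}, m ∈ phi t → ∃ s, subAt t m = some s
  | .leaf, _, hm => absurd hm List.not_mem_nil
  | .node l r, m, hm => by
    have := l.one_le_size; have := r.one_le_size
    have hm' := mem_phi.1 hm
    rw [BTree.size] at hm'
    rw [subAt]
    split_ifs
    · exact ⟨_, rfl⟩
    · exact exists_subAt_of_mem_phi (mem_phi.2 (by omega))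
    · exact exists_subAt_of_mem_phi (mem_phi.2 (by omega))

lemma exists_subAt_of_mem_subtrees : ∀ {t s : BTree}, s ∈ t.subtrees → s ≠ .leaf →
    ∃ m, subAt t m = some s
  | .leaf, s, hs, hne => absurd (List.mem_singleton.1 hs) hne
  | .node l r, s, hs, hne => by
    have := l.one_le_size; have := r.one_le_size
    rw [BTree.subtrees, List.mem_cons, List.mem_append] at hs
    rcases hs with rfl | hs | hs
    · exact ⟨l.size + r.size - 1, by simp [subAt]⟩
    · obtain ⟨m, hm⟩ := exists_subAt_of_mem_subtrees hs hne
      have := mem_phi.1 (mem_phi_of_subAt hm)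
      refine ⟨m + (r.size - 1), ?_⟩
      rwa [subAt, if_neg (by omega), if_pos (by omega), Nat.add_sub_cancel]
    · obtain ⟨m, hm⟩ := exists_subAt_of_mem_subtrees hs hne
      have := mem_phi.1 (mem_phi_of_subAt hm)
      refine ⟨m, ?_⟩
      rwa [subAt, if_neg (by omega), if_neg (by omega)]

/-- Under φ, the subtree `t_m` rooted at the node labelled `m` is a caterpillar of size
`j+1` iff `r̃_π(m)` is a 231-avoiding permutation of size `j`; in particular
`γ(t) − 1` is the maximal size of a permutation in `Av(231) ∩ r̃_π`. -/
theorem caterpillar_iff_rsub_avoids231 (t : BTree) (h : 2 ≤ t.size) :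
    (∀ m : ℕ, ∀ s : BTree, subAt t m = some s → ∀ j : ℕ,
      (s.isCaterpillar ∧ s.size = j + 1) ↔
        (Avoids231 (rsub (phi t) ((phi t).idxOf m)) ∧
          (rsub (phi t) ((phi t).idxOf m)).length = j)) ∧
    IsGreatest {j | ∃ i < (phi t).length, Avoids231 (rsub (phi t) i) ∧
        (rsub (phi t) i).length = j}
      (t.gamma - 1) := by
  refine ⟨fun m s hs j => isCaterpillar_and_size_iff_of_subAt hs j, ?_, ?_⟩
  · obtain ⟨s, hs, hcat, hsize⟩ := t.isGreatest_gamma.1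
    have := t.two_le_gamma h
    obtain ⟨m, hm⟩ :=
      exists_subAt_of_mem_subtrees hs (by rintro rfl; rw [BTree.size] at hsize; omega)
    exact ⟨_, List.idxOf_lt_length_iff.2 (mem_phi_of_subAt hm),
      (isCaterpillar_and_size_iff_of_subAt hm _).1 ⟨hcat, by omega⟩⟩
  · rintro j ⟨i, hi, hj⟩
    obtain ⟨s, hs⟩ := exists_subAt_of_mem_phi (List.getElem_mem hi)
    rw [← (nodup_phi t).idxOf_getElem i hi] at hj
    obtain ⟨hcat, hsize⟩ := (isCaterpillar_and_size_iff_of_subAt hs j).2 hj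
    have := t.isGreatest_gamma.2 ⟨s, mem_subtrees_of_subAt hs, hcat, rfl⟩
    omega
end
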